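/- The function h₀ defined on [0, 1/π] by h₀(s) := (π/2)·∫₀^s dτ/(2−√(1+4τ²)) − (1/2)·arcsin(π s) is strictly decreasing, and h₀(0) = 0; in particular h₀(s) < 0 for 0 < s ≤ 1/π. -/
import Mathlib


open MeasureTheory

/-- `h₀(s) = (π/2)·∫₀^s dτ/(2−√(1+4τ²)) − (1/2)·arcsin(πs)`. -/
noncomputable def h₀ (s : ℝ) : ℝ :=
  (Real.pi/2) * (∫ τ in (0:ℝ)..s, 1/(2 - Real.sqrt (1 + 4*τ^2))) -
    (1/2) * Real.arcsin (Real.pi * s)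

namespace H0Aux

noncomputable def g (τ : ℝ) : ℝ := 1/(2 - Real.sqrt (1 + 4*τ^2))

def U : Set ℝ := Set.Ioo (-(1/2)) (1/2)

lemma den_pos {τ : ℝ} (hτ : τ ∈ U) : 0 < 2 - Real.sqrt (1 + 4*τ^2) := by
  obtain ⟨h1, h2⟩ := hτ
  have hlt : Real.sqrt (1 + 4*τ^2) < 2 := by
    rw [Real.sqrt_lt' (by norm_num)]
    nlinarith
  linarith

lemma g_contAt {τ : ℝ} (hτ : τ ∈ U) : ContinuousAt g τ := by
  have hden : Continuous (fun τ : ℝ => 2 - Real.sqrt (1 + 4*τ^2)) := by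
    continuity
  exact continuousAt_const.div hden.continuousAt (ne_of_gt (den_pos hτ))

lemma g_contOn : ContinuousOn g U := fun x hx => (g_contAt hx).continuousWithinAt

lemma F_hasDeriv {b : ℝ} (hb : b ∈ U) :
    HasDerivAt (fun s => ∫ τ in (0:ℝ)..s, g τ) (g b) b := by
  have h0 : (0:ℝ) ∈ U := by constructor <;> norm_num
  have hsub : Set.uIcc (0:ℝ) b ⊆ U :=
    (Set.ordConnected_Ioo).uIcc_subset h0 hb
  have hint : IntervalIntegrable g volume 0 b :=
    (g_contOn.mono hsub).intervalIntegrable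
  exact intervalIntegral.integral_hasDerivAt_right hint
    (g_contOn.stronglyMeasurableAtFilter isOpen_Ioo b hb) (g_contAt hb)

lemma pi_inv_lt_half : 1/Real.pi < 1/2 := by
  rw [div_lt_div_iff₀ Real.pi_pos (by norm_num)]
  nlinarith [Real.pi_gt_three]

lemma Icc_sub_U : Set.Icc (0:ℝ) (1/Real.pi) ⊆ U := by
  intro x hx
  exact ⟨by linarith [hx.1], lt_of_le_of_lt hx.2 pi_inv_lt_half⟩

lemma h₀_hasDeriv {s : ℝ} (hs : s ∈ Set.Ioo (0:ℝ) (1/Real.pi)) :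
    HasDerivAt h₀
      ((Real.pi/2) * g s - (1/2) * (1 / Real.sqrt (1 - (Real.pi*s)^2) * Real.pi)) s := by
  have hsU : s ∈ U := Icc_sub_U ⟨hs.1.le, hs.2.le⟩
  have hπs1 : Real.pi * s < 1 := by
    have := hs.2
    rw [lt_div_iff₀ Real.pi_pos] at this
    linarith
  have hπs0 : 0 < Real.pi * s := mul_pos Real.pi_pos hs.1
  have harc : HasDerivAt Real.arcsin (1 / Real.sqrt (1 - (Real.pi*s)^2)) (Real.pi*s) :=
    Real.hasDerivAt_arcsin (by linarith) (ne_of_lt hπs1)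
  have hlin : HasDerivAt (fun s : ℝ => Real.pi * s) Real.pi s := by
    simpa using (hasDerivAt_id s).const_mul Real.pi
  have hcomp : HasDerivAt (fun s : ℝ => Real.arcsin (Real.pi * s))
      (1 / Real.sqrt (1 - (Real.pi*s)^2) * Real.pi) s := harc.comp s hlin
  have hF := (F_hasDeriv hsU).const_mul (Real.pi/2)
  exact hF.sub (hcomp.const_mul (1/2))

lemma key {s : ℝ} (hs : s ∈ Set.Ioo (0:ℝ) (1/Real.pi)) :
    Real.sqrt (1 - (Real.pi*s)^2) < 2 - Real.sqrt (1 + 4*s^2) := by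
  have hsU : s ∈ U := Icc_sub_U ⟨hs.1.le, hs.2.le⟩
  have hπs1 : Real.pi * s < 1 := by
    have := hs.2
    rw [lt_div_iff₀ Real.pi_pos] at this
    linarith
  have hπs0 : 0 < Real.pi * s := mul_pos Real.pi_pos hs.1
  set A := Real.sqrt (1 + 4*s^2) with hA
  set B := Real.sqrt (1 - (Real.pi*s)^2) with hB
  have hA2 : A^2 = 1 + 4*s^2 := Real.sq_sqrt (by positivity)
  have hB2 : B^2 = 1 - (Real.pi*s)^2 := Real.sq_sqrt (by nlinarith)
  have hA0 : 0 ≤ A := Real.sqrt_nonneg _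
  have hB0 : 0 ≤ B := Real.sqrt_nonneg _
  have hAlt : A < 1 + 2*s^2 := by
    rw [hA, Real.sqrt_lt' (by positivity)]
    have hs2 : 0 < s^2 := pow_pos hs.1 2
    nlinarith [mul_pos hs2 hs2]
  have hπ : 3 < Real.pi := Real.pi_gt_three
  have h4 : 4*A < 4 + (4 + Real.pi^2)*s^2 := by
    have hs2 : 0 < s^2 := pow_pos hs.1 2
    have hπ4 : 4 < Real.pi^2 := by nlinarith
    nlinarith [hAlt, mul_pos (show (0:ℝ) < Real.pi^2 - 4 by linarith) hs2]
  -- (2-A)^2 - B^2 = 4 - 4A + (4+π²)s² > 0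
  have h2A : 0 < 2 - A := den_pos hsU
  nlinarith [h4, hA2, hB2, hB0, h2A, sq_nonneg (2 - A - B)]

lemma deriv_neg {s : ℝ} (hs : s ∈ Set.Ioo (0:ℝ) (1/Real.pi)) :
    (Real.pi/2) * g s - (1/2) * (1 / Real.sqrt (1 - (Real.pi*s)^2) * Real.pi) < 0 := by
  have hsU : s ∈ U := Icc_sub_U ⟨hs.1.le, hs.2.le⟩
  have hπs1 : Real.pi * s < 1 := by
    have := hs.2
    rw [lt_div_iff₀ Real.pi_pos] at this
    linarith
  have hπs0 : 0 < Real.pi * s := mul_pos Real.pi_pos hs.1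
  have hB0 : 0 < Real.sqrt (1 - (Real.pi*s)^2) := Real.sqrt_pos.mpr (by nlinarith)
  have hk := key hs
  have hdiv : 1/(2 - Real.sqrt (1 + 4*s^2)) < 1 / Real.sqrt (1 - (Real.pi*s)^2) :=
    one_div_lt_one_div_of_lt hB0 hk
  have hπ2 : (0:ℝ) < Real.pi/2 := by positivity
  have := mul_lt_mul_of_pos_left hdiv hπ2
  have heq : (1/2) * (1 / Real.sqrt (1 - (Real.pi*s)^2) * Real.pi)
      = (Real.pi/2) * (1 / Real.sqrt (1 - (Real.pi*s)^2)) := by ring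
  rw [heq]
  simp only [g]
  linarith

end H0Aux

theorem h₀_strictAnti_and_neg :
    StrictAntiOn h₀ (Set.Icc 0 (1/Real.pi)) ∧ h₀ 0 = 0 ∧
      ∀ s, 0 < s → s ≤ 1/Real.pi → h₀ s < 0 := by
  have hpi : (0:ℝ) < 1/Real.pi := by positivity
  have hcont : ContinuousOn h₀ (Set.Icc 0 (1/Real.pi)) := by
    have hF : ContinuousOn (fun s => ∫ τ in (0:ℝ)..s, H0Aux.g τ) H0Aux.U :=
      fun b hb => ((H0Aux.F_hasDeriv hb).continuousAt).continuousWithinAt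
    have h1 : ContinuousOn (fun s => (Real.pi/2) *
        (∫ τ in (0:ℝ)..s, 1/(2 - Real.sqrt (1 + 4*τ^2)))) (Set.Icc 0 (1/Real.pi)) :=
      continuousOn_const.mul (hF.mono H0Aux.Icc_sub_U)
    have h2 : ContinuousOn (fun s : ℝ => (1/2) * Real.arcsin (Real.pi * s))
        (Set.Icc 0 (1/Real.pi)) :=
      (continuous_const.mul (Real.continuous_arcsin.comp
        (continuous_const.mul continuous_id))).continuousOn
    exact h1.sub h2
  have hanti : StrictAntiOn h₀ (Set.Icc 0 (1/Real.pi)) := by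
    apply strictAntiOn_of_deriv_neg (convex_Icc _ _) hcont
    intro x hx
    rw [interior_Icc] at hx
    rw [(H0Aux.h₀_hasDeriv hx).deriv]
    exact H0Aux.deriv_neg hx
  have h0 : h₀ 0 = 0 := by simp [h₀]
  refine ⟨hanti, h0, fun s hs hs' => ?_⟩
  have := hanti (Set.mem_Icc.mpr ⟨le_refl 0, hpi.le⟩) (Set.mem_Icc.mpr ⟨hs.le, hs'⟩) hs
  rw [h0] at this
  exact this
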